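/- arXiv:1604.07128 — 2 statements merged into one kernel-verified Lean document; each statement's English description precedes it below -/
import Mathlib

section
/- For every finite cograph G, the Grundy number of G equals the clique number of G, which in turn equals the chromatic number of G. -/
open SimpleGraph

/-- A first-fit (greedy/Grundy) coloring: a proper coloring by naturals such that every
vertex with color `j` has a neighbor of each color `i < j`. -/
def IsGrundyColoring {V : Type*} (G : SimpleGraph V) (f : V → ℕ) : Prop :=
  (∀ u v : V, G.Adj u v → f u ≠ f v) ∧
  ∀ v : V, ∀ i < f v, ∃ u : V, G.Adj v u ∧ f u = i

/-- The Grundy number: the maximum number of colors used by a first-fit coloring. -/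
noncomputable def grundy {V : Type*} [Fintype V] (G : SimpleGraph V) : ℕ :=
  sSup {k | ∃ f : V → ℕ, IsGrundyColoring G f ∧ k = (Finset.univ.image f).card}

/-- The join of two graphs: their disjoint union plus all edges between the parts. -/
def SimpleGraph.join {α β : Type*} (G : SimpleGraph α) (H : SimpleGraph β) :
    SimpleGraph (α ⊕ β) where
  Adj u v := match u, v with
    | Sum.inl u, Sum.inl v => G.Adj u v
    | Sum.inr u, Sum.inr v => H.Adj u v
    | _, _ => True
  symm := ⟨fun u v => match u, v with
    | Sum.inl u, Sum.inl v => G.adj_symm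
    | Sum.inr u, Sum.inr v => H.adj_symm
    | Sum.inl _, Sum.inr _ | Sum.inr _, Sum.inl _ => fun _ => trivial⟩
  loopless := ⟨fun u => by cases u <;> simp⟩

/-- `H` occurs as an induced subgraph of `G`. -/
def HasInduced {V W : Type*} (G : SimpleGraph V) (H : SimpleGraph W) : Prop :=
  ∃ f : W ↪ V, ∀ a b : W, G.Adj (f a) (f b) ↔ H.Adj a b

/-- A cograph is a graph without induced `P₄`. -/
def IsCograph {V : Type*} (G : SimpleGraph V) : Prop :=
  ¬ HasInduced G (pathGraph 4)

/-- Seidel switching with respect to a vertex set `S`: adjacencies between `S` and its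
complement are complemented, other adjacencies are unchanged. -/
def seidelSwitch {V : Type*} (G : SimpleGraph V) (S : Set V) : SimpleGraph V where
  Adj x y := x ≠ y ∧ (G.Adj x y ↔ ((x ∈ S) ↔ (y ∈ S)))
  symm := ⟨by
    rintro x y ⟨h1, h2⟩
    refine ⟨h1.symm, ?_⟩
    rw [G.adj_comm] at h2
    tauto⟩
  loopless := ⟨fun x h => h.1 rfl⟩

/-- A Cameron graph: obtained from some cograph by some Seidel switch. -/
def IsCameron {V : Type*} (G : SimpleGraph V) : Prop :=
  ∃ (S : Set V) (H : SimpleGraph V), IsCograph H ∧ G = seidelSwitch H S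

open scoped Classical in
/-- The number of edges of `G` among the three pairs from `{x, y, z}`. -/
noncomputable def edgeCount {V : Type*} (G : SimpleGraph V) (x y z : V) : ℕ :=
  (if G.Adj x y then 1 else 0) + (if G.Adj x z then 1 else 0) + (if G.Adj y z then 1 else 0)

/-- A triple of (distinct) vertices is odd if it spans an odd number of edges. -/
def OddTriple {V : Type*} (G : SimpleGraph V) (x y z : V) : Prop :=
  Odd (edgeCount G x y z)

/-- `C` is an independent set of `G`. -/
def IsIndepOn {V : Type*} (G : SimpleGraph V) (C : Set V) : Prop :=
  ∀ u ∈ C, ∀ v ∈ C, ¬ G.Adj u v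

/-- `C` is a maximal independent set of the subgraph of `G` induced by `W`. -/
def IsMaxIndepOn {V : Type*} (G : SimpleGraph V) (W C : Set V) : Prop :=
  C ⊆ W ∧ IsIndepOn G C ∧ ∀ D, C ⊆ D → D ⊆ W → IsIndepOn G D → D = C

/-- `C` is a maximal clique of the subgraph of `G` induced by `W`. -/
def IsMaxCliqueOn {V : Type*} (G : SimpleGraph V) (W C : Set V) : Prop :=
  C ⊆ W ∧ G.IsClique C ∧ ∀ D, C ⊆ D → D ⊆ W → G.IsClique D → D = C

/-- `x` and `y` are twins within `W`: every other vertex of `W` is adjacent to both or neither. -/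
def TwinsOn {V : Type*} (G : SimpleGraph V) (W : Set V) (x y : V) : Prop :=
  ∀ z ∈ W, z ≠ x → z ≠ y → (G.Adj x z ↔ G.Adj y z)

/-- `x` and `y` are anti-twins within `W`: every other vertex of `W` is adjacent to
exactly one of them. -/
def AntiTwinsOn {V : Type*} (G : SimpleGraph V) (W : Set V) (x y : V) : Prop :=
  ∀ z ∈ W, z ≠ x → z ≠ y → (G.Adj x z ↔ ¬ G.Adj y z)

/-- The bull graph. -/
def bull : SimpleGraph (Fin 5) :=
  SimpleGraph.fromRel fun i j => (i.val, j.val) ∈ [(0,1),(0,2),(1,2),(0,3),(1,4)]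

/-- The gem graph: `P₄` plus a dominating vertex. -/
def gem : SimpleGraph (Fin 5) :=
  SimpleGraph.fromRel fun i j => (i.val, j.val) ∈ [(0,1),(1,2),(2,3),(4,0),(4,1),(4,2),(4,3)]

/-!
Let `C` be an independent set and `K` a clique of a cograph such that every vertex of `K` has
a neighbour in `C`. Then one vertex of `C` sees all of `K`: pick `c ∈ C` with the most
neighbours in `K`; if `c` misses `y ∈ K`, a neighbour `c' ∈ C` of `y` must miss some neighbour
`x ∈ K` of `c`, and `c x y c'` is an induced `P₄`. Applied to the colour classes of a first-fit
colouring from the top colour downwards, this puts every vertex of colour `m` in a clique of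
size `m + 1`. So first-fit colourings use at most `ω` colours, giving `Γ ≤ ω` and `χ ≤ ω`,
while every proper colouring uses at least `ω` colours and a first-fit colouring exists
(a proper colouring of minimal colour sum).
-/

section

variable {V : Type*} {G : SimpleGraph V}

theorem exists_isGrundyColoring [Fintype V] (G : SimpleGraph V) :
    ∃ f : V → ℕ, IsGrundyColoring G f := by
  classical
  let proper : Set (V → ℕ) := {f | ∀ u v, G.Adj u v → f u ≠ f v}
  have hproper : proper.Nonempty := ⟨fun v => Fintype.equivFin V v,
    fun u v huv h => G.ne_of_adj huv (by simpa [Fin.val_inj] using h)⟩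
  obtain ⟨f, hf, hmin⟩ := (measure fun f : V → ℕ => ∑ v, f v).wf.has_min proper hproper
  refine ⟨f, hf, fun v i hi => ?_⟩
  by_contra! hmissing
  have hupdate : Function.update f v i ∈ proper := by
    intro a b hab
    rcases eq_or_ne a v with rfl | ha
    · have hb : b ≠ a := (G.ne_of_adj hab).symm
      simpa [hb] using (hmissing b hab).symm
    rcases eq_or_ne b v with rfl | hb
    · simpa [ha] using hmissing a hab.symm
    · simpa [ha, hb] using hf a b hab
  have hsum : ∑ u, Function.update f v i u < ∑ u, f u := by
    refine Finset.sum_lt_sum (fun u _ => ?_) ⟨v, Finset.mem_univ v, by simpa⟩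
    rcases eq_or_ne u v with rfl | hu
    · simpa using hi.le
    · simp [hu]
  exact hmin _ hupdate hsum

theorem IsGrundyColoring.card_image_le_grundy [Fintype V] {f : V → ℕ}
    (hf : IsGrundyColoring G f) : (Finset.univ.image f).card ≤ grundy G :=
  le_csSup ⟨Fintype.card V, by rintro _ ⟨g, -, rfl⟩; exact Finset.card_image_le⟩
    ⟨f, hf, rfl⟩

theorem SimpleGraph.IsClique.card_le_card_image [Fintype V] {s : Finset V}
    (hs : G.IsClique (s : Set V)) {f : V → ℕ} (hf : ∀ u v, G.Adj u v → f u ≠ f v) :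
    s.card ≤ (Finset.univ.image f).card :=
  calc s.card = (s.image f).card :=
        (Finset.card_image_of_injOn fun u hu v hv huv =>
          by_contra fun hne => hf u v (hs hu hv hne) huv).symm
    _ ≤ (Finset.univ.image f).card :=
        Finset.card_le_card (Finset.image_subset_image s.subset_univ)

theorem hasInduced_pathGraph_four {a b c d : V} (hab : G.Adj a b) (hbc : G.Adj b c)
    (hcd : G.Adj c d) (hac : ¬ G.Adj a c) (had : ¬ G.Adj a d) (hbd : ¬ G.Adj b d) :
    HasInduced G (pathGraph 4) := by
  have hca : ¬ G.Adj c a := fun h => hac h.symm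
  have hda : ¬ G.Adj d a := fun h => had h.symm
  have hdb : ¬ G.Adj d b := fun h => hbd h.symm
  refine ⟨⟨![a, b, c, d], fun i j hij => ?_⟩, fun i j => ?_⟩
  · fin_cases i <;> fin_cases j <;> simp_all [G.ne_of_adj hab, G.ne_of_adj hbc,
      G.ne_of_adj hcd, (G.ne_of_adj hab).symm, (G.ne_of_adj hbc).symm, (G.ne_of_adj hcd).symm]
  · change G.Adj (![a, b, c, d] i) (![a, b, c, d] j) ↔ _
    fin_cases i <;> fin_cases j <;> simp [pathGraph_adj, hab, hbc, hcd, hac, had, hbd, hab.symm,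
      hbc.symm, hcd.symm, hca, hda, hdb]

theorem IsCograph.exists_forall_adj_of_isIndepSet (hG : IsCograph G) {C K : Finset V}
    (hC : G.IsIndepSet (C : Set V)) (hK : G.IsClique (K : Set V)) (hK₀ : K.Nonempty)
    (hKC : ∀ k ∈ K, ∃ c ∈ C, G.Adj k c) : ∃ c ∈ C, ∀ k ∈ K, G.Adj c k := by
  classical
  have hC₀ : C.Nonempty := by
    obtain ⟨k, hk⟩ := hK₀
    obtain ⟨c, hc, -⟩ := hKC k hk
    exact ⟨c, hc⟩
  obtain ⟨c, hc, hmax⟩ := C.exists_max_image (fun c => (K.filter (G.Adj c)).card) hC₀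
  refine ⟨c, hc, fun y hy => ?_⟩
  by_contra hcy
  obtain ⟨c', hc', hyc'⟩ := hKC y hy
  obtain ⟨x, hx, hcx, hc'x⟩ : ∃ x ∈ K, G.Adj c x ∧ ¬ G.Adj c' x := by
    by_contra! hsub
    have hssub : K.filter (G.Adj c) ⊂ K.filter (G.Adj c') :=
      Finset.ssubset_iff_of_subset (fun x hx => by simp_all) |>.2
        ⟨y, by simp [hy, hyc'.symm], by simp [hcy]⟩
    exact (hmax c' hc').not_gt (Finset.card_lt_card hssub)
  have hcc' : ¬ G.Adj c c' := hC hc hc' (by rintro rfl; exact hcy hyc'.symm)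
  have hxy : G.Adj x y := hK hx hy (by rintro rfl; exact hcy hcx)
  exact hG (hasInduced_pathGraph_four hcx hxy hyc' hcy hcc' fun h => hc'x h.symm)

theorem IsCograph.exists_isNClique_of_isGrundyColoring (hG : IsCograph G) {f : V → ℕ}
    (hf : IsGrundyColoring G f) (v : V) :
    ∀ d ≤ f v, ∃ K : Finset V, G.IsNClique (d + 1) K ∧ ∀ u ∈ K, f v - d ≤ f u := by
  classical
  intro d
  induction d with
  | zero => exact fun _ => ⟨{v}, by simp, by simp⟩
  | succ d ih =>
    intro hd
    obtain ⟨K, hK, hKf⟩ := ih (by omega)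
    have hnbr : ∀ u ∈ K, ∃ w, G.Adj u w ∧ f w = f v - (d + 1) :=
      fun u hu => hf.2 u _ (by have := hKf u hu; omega)
    choose! g hg using hnbr
    have hC : G.IsIndepSet (K.image g : Set V) := by
      simp only [Finset.coe_image]
      rintro _ ⟨u, hu, rfl⟩ _ ⟨u', hu', rfl⟩ - hadj
      exact hf.1 _ _ hadj ((hg u hu).2.trans (hg u' hu').2.symm)
    have hK₀ : K.Nonempty := Finset.card_pos.1 (by rw [hK.card_eq]; omega)
    obtain ⟨w, hw, hwK⟩ := hG.exists_forall_adj_of_isIndepSet hC hK.isClique hK₀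
      fun u hu => ⟨g u, Finset.mem_image_of_mem g hu, (hg u hu).1⟩
    obtain ⟨u, hu, rfl⟩ := Finset.mem_image.1 hw
    refine ⟨insert (g u) K, hK.insert hwK, ?_⟩
    simp only [Finset.mem_insert, forall_eq_or_imp, (hg u hu).2, le_refl, true_and]
    exact fun u' hu' => (Nat.sub_le_sub_left (Nat.le_succ d) _).trans (hKf u' hu')

theorem IsCograph.lt_cliqueNum_of_isGrundyColoring [Finite V] (hG : IsCograph G) {f : V → ℕ}
    (hf : IsGrundyColoring G f) (v : V) : f v < G.cliqueNum := by
  obtain ⟨K, hK, -⟩ := hG.exists_isNClique_of_isGrundyColoring hf v (f v) le_rfl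
  have := hK.isClique.card_le_cliqueNum
  rw [hK.card_eq] at this
  omega

theorem IsCograph.grundy_le_cliqueNum [Fintype V] (hG : IsCograph G) :
    grundy G ≤ G.cliqueNum := by
  refine csSup_le' ?_
  rintro _ ⟨f, hf, rfl⟩
  calc (Finset.univ.image f).card ≤ (Finset.range G.cliqueNum).card :=
        Finset.card_le_card fun _ hc => by
          obtain ⟨v, -, rfl⟩ := Finset.mem_image.1 hc
          exact Finset.mem_range.2 (hG.lt_cliqueNum_of_isGrundyColoring hf v)
    _ = G.cliqueNum := Finset.card_range _

theorem IsCograph.colorable_cliqueNum [Fintype V] (hG : IsCograph G) :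
    G.Colorable G.cliqueNum := by
  obtain ⟨f, hf⟩ := exists_isGrundyColoring G
  exact (colorable_iff_exists_bdd_nat_coloring _).2
    ⟨Coloring.mk f fun huv => hf.1 _ _ huv, hG.lt_cliqueNum_of_isGrundyColoring hf⟩

end

/-- for a finite cograph, Grundy number = clique number = chromatic number. -/
theorem cograph_grundy_eq_cliqueNum_eq_chromaticNumber {V : Type*} [Fintype V]
    (G : SimpleGraph V) (hG : IsCograph G) :
    grundy G = G.cliqueNum ∧ (G.cliqueNum : ℕ∞) = G.chromaticNumber := by
  obtain ⟨f, hf⟩ := exists_isGrundyColoring G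
  obtain ⟨K, hK⟩ := G.exists_isNClique_cliqueNum
  have hω_le : G.cliqueNum ≤ (Finset.univ.image f).card :=
    hK.card_eq ▸ hK.isClique.card_le_card_image hf.1
  exact ⟨hG.grundy_le_cliqueNum.antisymm (hω_le.trans hf.card_image_le_grundy),
    G.cliqueNum_le_chromaticNumber.antisymm hG.colorable_cliqueNum.chromaticNumber_le⟩
end

section
/- A graph G is a Cameron graph if and only if for every (equivalently, some) vertex x of G, the Seidel switch of G with respect to the open neighborhood N(x) is a cograph in which x is an isolated vertex. -/
open SimpleGraph

/-!
Seidel switching is an involution, and switching any member of the switching class of `G` at the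
neighbourhood of `x` gives the same graph: the member of the class in which `x` is isolated. So a
cograph obtained from `G` by switching shows that `G` is Cameron, and conversely, if `G` is a
switch of a cograph `H`, switching `G` at `N_G(x)` is switching `H` at `N_H(x)`. That this yields
a cograph is a check on five vertices: an induced `P₄` of the switched graph avoids the isolated
`x`, and on `x` together with that `P₄` the graph `H` is a switch of `P₄ + K₁`, every one of which
contains an induced `P₄`.
-/

instance (n : ℕ) : DecidableRel (pathGraph n).Adj := fun _ _ => decidable_of_iff' _ pathGraph_adj

section SeidelSwitch

variable {V : Type*}

@[simp]
lemma seidelSwitch_adj (G : SimpleGraph V) (S : Set V) {x y : V} :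
    (seidelSwitch G S).Adj x y ↔ x ≠ y ∧ (G.Adj x y ↔ (x ∈ S ↔ y ∈ S)) := Iff.rfl

instance (G : SimpleGraph V) (S : Set V) [DecidableEq V] [DecidableRel G.Adj]
    [DecidablePred (· ∈ S)] : DecidableRel (seidelSwitch G S).Adj :=
  fun _ _ => decidable_of_iff' _ (seidelSwitch_adj G S)

lemma seidelSwitch_seidelSwitch (G : SimpleGraph V) (S : Set V) :
    seidelSwitch (seidelSwitch G S) S = G := by
  ext y z
  by_cases hyz : y = z
  · simp [hyz]
  · simp only [seidelSwitch_adj, ne_eq, hyz, not_false_eq_true, true_and]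
    tauto

lemma not_adj_seidelSwitch_neighborSet (G : SimpleGraph V) (x y : V) :
    ¬ (seidelSwitch G (G.neighborSet x)).Adj x y := by
  simp

/-- For `y, z ≠ x` both sides flip `G.Adj y z` by `G.Adj x y ↔ G.Adj x z`, the two flips by `S`
cancelling. -/
lemma seidelSwitch_neighborSet_seidelSwitch (G : SimpleGraph V) (S : Set V) (x : V) :
    seidelSwitch (seidelSwitch G S) ((seidelSwitch G S).neighborSet x) =
      seidelSwitch G (G.neighborSet x) := by
  ext y z
  by_cases hy : y = x
  · subst hy
    exact iff_of_false (not_adj_seidelSwitch_neighborSet _ _ _)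
      (not_adj_seidelSwitch_neighborSet _ _ _)
  by_cases hz : z = x
  · subst hz
    exact iff_of_false (fun h => not_adj_seidelSwitch_neighborSet _ _ _ h.symm)
      (fun h => not_adj_seidelSwitch_neighborSet _ _ _ h.symm)
  simp only [seidelSwitch_adj, mem_neighborSet, Ne.symm hy, Ne.symm hz, ne_eq, not_false_eq_true,
    true_and]
  by_cases hyS : y ∈ S <;> by_cases hzS : z ∈ S <;> by_cases hxS : x ∈ S <;>
    simp [hyS, hzS, hxS] <;> tauto

lemma comap_seidelSwitch {W : Type*} (G : SimpleGraph V) (S : Set V) {g : W → V}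
    (hg : g.Injective) : (seidelSwitch G S).comap g = seidelSwitch (G.comap g) (g ⁻¹' S) := by
  ext a b
  simp [hg.ne_iff]

lemma isCameron_of_isCograph_seidelSwitch (G : SimpleGraph V) (S : Set V)
    (h : IsCograph (seidelSwitch G S)) : IsCameron G :=
  ⟨S, _, h, (seidelSwitch_seidelSwitch G S).symm⟩

end SeidelSwitch

section HasInduced

variable {U V W : Type*}

lemma hasInduced_iff_exists_injective (G : SimpleGraph V) (H : SimpleGraph W) :
    HasInduced G H ↔ ∃ f : W → V, f.Injective ∧ ∀ a b, G.Adj (f a) (f b) ↔ H.Adj a b :=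
  ⟨fun ⟨f, hf⟩ => ⟨f, f.injective, hf⟩, fun ⟨f, hinj, hf⟩ => ⟨⟨f, hinj⟩, hf⟩⟩

lemma HasInduced.trans {G : SimpleGraph U} {H : SimpleGraph V} {K : SimpleGraph W}
    (hGH : HasInduced G H) (hHK : HasInduced H K) : HasInduced G K := by
  obtain ⟨f, hf⟩ := hGH
  obtain ⟨g, hg⟩ := hHK
  exact ⟨g.trans f, fun a b => (hf _ _).trans (hg a b)⟩

lemma hasInduced_comap (G : SimpleGraph V) {g : W → V} (hg : g.Injective) :
    HasInduced G (G.comap g) :=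
  ⟨⟨g, hg⟩, fun _ _ => Iff.rfl⟩

end HasInduced

/-- Every graph in the switching class of `P₄ + K₁` (the isolated vertex being `0`) contains an
induced `P₄`; checked over all 32 switching sets. -/
lemma hasInduced_pathGraph_seidelSwitch_map_succ (S : Set (Fin 5)) :
    HasInduced (seidelSwitch ((pathGraph 4).map (Fin.succEmb 4)) S) (pathGraph 4) := by
  classical
  lift S to Finset (Fin 5) using S.toFinite
  rw [hasInduced_iff_exists_injective]
  revert S
  decide +kernel

lemma IsCograph.seidelSwitch_neighborSet {V : Type*} {H : SimpleGraph V} (hH : IsCograph H)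
    (x : V) : IsCograph (seidelSwitch H (H.neighborSet x)) := by
  rintro ⟨f, hf⟩
  have hx : x ∉ Set.range f := by
    rintro ⟨i, hi⟩
    obtain ⟨j, hij⟩ := (by decide : ∀ i : Fin 4, ∃ j, (pathGraph 4).Adj i j) i
    exact not_adj_seidelSwitch_neighborSet H x (f j) (hi ▸ (hf i j).2 hij)
  set g : Fin 5 → V := Fin.cons x f
  have hg : g.Injective := Fin.cons_injective_iff.2 ⟨hx, f.injective⟩
  -- `H` restricted to `x` and the `P₄` is a switch of `P₄ + K₁`
  set K := H.comap g
  have hK : seidelSwitch K (K.neighborSet 0) = (pathGraph 4).map (Fin.succEmb 4) := by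
    have : K.neighborSet 0 = g ⁻¹' H.neighborSet x := rfl
    rw [this, ← comap_seidelSwitch H _ hg]
    ext a b
    cases a using Fin.cases <;> cases b using Fin.cases
    · simp
    · exact iff_of_false (not_adj_seidelSwitch_neighborSet H x _)
        (by rintro ⟨-, u, v, -, hu, -⟩; exact Fin.succ_ne_zero _ hu)
    · exact iff_of_false (fun h => not_adj_seidelSwitch_neighborSet H x _ h.symm)
        (by rintro ⟨-, u, v, -, -, hv⟩; exact Fin.succ_ne_zero _ hv)
    · exact (hf _ _).trans map_adj_apply.symm
  have hKP : HasInduced K (pathGraph 4) := by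
    rw [← seidelSwitch_seidelSwitch K (K.neighborSet 0), hK]
    exact hasInduced_pathGraph_seidelSwitch_map_succ _
  exact hH ((hasInduced_comap H hg).trans hKP)

lemma IsCameron.isCograph_seidelSwitch_neighborSet {V : Type*} {G : SimpleGraph V}
    (hG : IsCameron G) (x : V) : IsCograph (seidelSwitch G (G.neighborSet x)) := by
  obtain ⟨S, H, hH, rfl⟩ := hG
  rw [seidelSwitch_neighborSet_seidelSwitch]
  exact hH.seidelSwitch_neighborSet x

theorem cameron_iff_switch_neighborhood_general {V : Type*} [Nonempty V]
    (G : SimpleGraph V) :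
    (IsCameron G ↔ ∀ x : V, IsCograph (seidelSwitch G (G.neighborSet x)) ∧
        ∀ y : V, ¬ (seidelSwitch G (G.neighborSet x)).Adj x y) ∧
    (IsCameron G ↔ ∃ x : V, IsCograph (seidelSwitch G (G.neighborSet x)) ∧
        ∀ y : V, ¬ (seidelSwitch G (G.neighborSet x)).Adj x y) := by
  have key : ∀ x, IsCameron G ↔ IsCograph (seidelSwitch G (G.neighborSet x)) ∧
      ∀ y, ¬ (seidelSwitch G (G.neighborSet x)).Adj x y := fun x =>
    ⟨fun h => ⟨h.isCograph_seidelSwitch_neighborSet x, not_adj_seidelSwitch_neighborSet G x⟩,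
      fun h => isCameron_of_isCograph_seidelSwitch G _ h.1⟩
  obtain ⟨x₀⟩ := ‹Nonempty V›
  exact ⟨⟨fun h x => (key x).1 h, fun h => (key x₀).2 (h x₀)⟩,
    ⟨fun h => ⟨x₀, (key x₀).1 h⟩, fun ⟨x, hx⟩ => (key x).2 hx⟩⟩

/-- a graph is Cameron iff for every (equivalently, some) vertex `x`,
switching with respect to `N(x)` yields a cograph in which `x` is isolated. -/
theorem cameron_iff_switch_neighborhood {V : Type*} [Fintype V] [Nonempty V]
    (G : SimpleGraph V) :
    (IsCameron G ↔ ∀ x : V, IsCograph (seidelSwitch G (G.neighborSet x)) ∧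
        ∀ y : V, ¬ (seidelSwitch G (G.neighborSet x)).Adj x y) ∧
    (IsCameron G ↔ ∃ x : V, IsCograph (seidelSwitch G (G.neighborSet x)) ∧
        ∀ y : V, ¬ (seidelSwitch G (G.neighborSet x)).Adj x y) :=
  cameron_iff_switch_neighborhood_general G
end
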